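/- If the lifted best misfit Φ^† is in L¹_{μ_θ} and the joint misfit Φ^j is in L¹_{μ_θ⊗μ_δ}, then the joint posterior μ^j := (μ_θ⊗μ_δ)_{Φ^j} and the lifted best posterior μ^†_{θ,δ} := (μ_θ)_{Φ^†} ⊗ μ_δ satisfy max{ d_KL(μ^†_{θ,δ} ‖ μ^j), d_KL(μ^j ‖ μ^†_{θ,δ}) } ≤ C · ( ∫∫ |O(δ^†(θ) − e(θ,w))|²_{Σ_η^{−1}} d(μ_θ⊗μ_δ)(θ,w) )^{1/2}, where C = 2^{1/2} · exp( 2‖Φ^j‖_{L¹_{μ_θ⊗μ_δ}} + 2‖Φ^†‖_{L¹_{μ_θ}} ) · ( ‖Φ^j‖_{L¹_{μ_θ⊗μ_δ}}^{1/2} + ‖Φ^†‖_{L¹_{μ_θ}}^{1/2} ). -/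

import Mathlib

open MeasureTheory Real Matrix ENNReal

open Classical in
/-- Kullback--Leibler divergence. -/
noncomputable def KLdiv {X : Type*} [MeasurableSpace X] (μ ν : Measure X) : ℝ≥0∞ :=
  if μ ≪ ν ∧ Integrable (fun x => Real.log ((μ.rnDeriv ν x).toReal)) μ
  then ENNReal.ofReal (∫ x, Real.log ((μ.rnDeriv ν x).toReal) ∂μ)
  else ⊤

/-- The posterior measure `μ_Φ` with density `exp (-Φ) / Z` w.r.t. `μ`. -/
noncomputable def posterior {X : Type*} [MeasurableSpace X] (μ : Measure X) (Φ : X → ℝ) :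
    Measure X :=
  μ.withDensity fun x => ENNReal.ofReal (Real.exp (-Φ x) / ∫ x', Real.exp (-Φ x') ∂μ)

/-!
Both posteriors are exponential tilts of the product prior: the lifted best posterior
`(μθ)_{Φ†} ⊗ μδ` is the tilt of `μθ ⊗ μδ` by `-Φ† ∘ fst`. Between two tilts the log-likelihood
ratio is `Φ₂ - Φ₁` plus the log-ratio of the normalising constants. Bounding that log-ratio with
`log t ≤ t - 1`, and the normalising constant of `μ_{Φ₁}` from below by `exp (-∫ Φ₁)` (Jensen),
gives `d_KL(μ_{Φ₁} ‖ μ_{Φ₂}) ≤ exp (∫ Φ₁) * ∫ |Φ₁ - Φ₂|`.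

Factoring `Γ⁻¹ = Bᵀ B` writes each misfit as `‖F‖² / 2` for a Euclidean residual `F`. Then
`|‖F‖² - ‖G‖²| ≤ ‖F - G‖ (‖F‖ + ‖G‖)` and Cauchy–Schwarz bound `∫ |Φ† - Φʲ|` by the `L²` norm
of `F - G`, which is the weighted model-error discrepancy, times `√(∫ Φ†) + √(∫ Φʲ)`.
-/

lemma posterior_eq_tilted {α : Type*} [MeasurableSpace α] (μ : Measure α) (Φ : α → ℝ) :
    posterior μ Φ = μ.tilted fun x ↦ -Φ x := rfl

lemma exp_neg_bregman_le_abs_sub {a b : ℝ} (ha : 0 ≤ a) (hb : 0 ≤ b) :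
    (b - a) * exp (-a) + (exp (-b) - exp (-a)) ≤ |a - b| := by
  rcases le_total a b with hab | hba
  · have : exp (-a) ≤ 1 := exp_le_one_iff.mpr (by linarith)
    have : exp (-b) ≤ exp (-a) := exp_le_exp.mpr (by linarith)
    rw [abs_of_nonpos (by linarith)]
    nlinarith
  · -- `exp (-b) - exp (-a) = exp (-b) * (1 - exp (b - a)) ≤ exp (-b) * (a - b)`
    have : exp (-a) = exp (-b) * exp (b - a) := by rw [← exp_add]; ring_nf
    have := add_one_le_exp (b - a)
    have : exp (-b) ≤ 1 := exp_le_one_iff.mpr (by linarith)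
    rw [abs_of_nonneg (by linarith)]
    nlinarith [exp_pos (-a), exp_pos (-b)]

section KullbackLeibler

variable {α : Type*} [MeasurableSpace α] {μ : Measure α}

lemma llr_tilted_tilted [SigmaFinite μ] {f g : α → ℝ} (hf : Integrable (fun x ↦ exp (f x)) μ)
    (hg : Integrable (fun x ↦ exp (g x)) μ) :
    llr (μ.tilted f) (μ.tilted g) =ᵐ[μ]
      fun x ↦ f x - g x + (log (∫ x, exp (g x) ∂μ) - log (∫ x, exp (f x) ∂μ)) := by
  have hfm : AEMeasurable f (μ.tilted g) :=
    (aemeasurable_of_aemeasurable_exp hf.1.aemeasurable).mono_ac (tilted_absolutelyContinuous μ g)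
  filter_upwards [llr_tilted_left (absolutelyContinuous_tilted hg) hf hfm,
    llr_tilted_right (Measure.AbsolutelyContinuous.refl μ) hg, llr_self μ] with x hl hr hs
  rw [hl, hr, hs, Pi.zero_apply]
  ring

lemma integrable_exp_neg_of_nonneg [IsFiniteMeasure μ] {Φ : α → ℝ}
    (hΦ : AEStronglyMeasurable Φ μ) (hΦ0 : ∀ x, 0 ≤ Φ x) : Integrable (fun x ↦ exp (-Φ x)) μ :=
  (integrable_const (1 : ℝ)).mono' (continuous_exp.comp_aestronglyMeasurable hΦ.neg)
    (ae_of_all _ fun x ↦ by simpa using hΦ0 x)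

variable [IsProbabilityMeasure μ]

lemma KLdiv_tilted_eq {f g : α → ℝ} (hf : Integrable (fun x ↦ exp (f x)) μ)
    (hg : Integrable (fun x ↦ exp (g x)) μ) (hfg : Integrable (fun x ↦ f x - g x) (μ.tilted f)) :
    KLdiv (μ.tilted f) (μ.tilted g) = ENNReal.ofReal (∫ x, (f x - g x) ∂(μ.tilted f) +
      (log (∫ x, exp (g x) ∂μ) - log (∫ x, exp (f x) ∂μ))) := by
  have := isProbabilityMeasure_tilted hf
  have hllr := (tilted_absolutelyContinuous μ f).ae_eq (llr_tilted_tilted hf hg)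
  have hint : Integrable (llr (μ.tilted f) (μ.tilted g)) (μ.tilted f) :=
    (hfg.add (integrable_const _)).congr hllr.symm
  rw [KLdiv, if_pos ⟨(tilted_absolutelyContinuous μ f).trans (absolutelyContinuous_tilted hg),
    hint⟩]
  change ENNReal.ofReal (∫ x, llr (μ.tilted f) (μ.tilted g) x ∂μ.tilted f) = _
  rw [integral_congr_ae hllr, integral_add hfg (integrable_const _), integral_const,
    probReal_univ, one_smul]

lemma exp_integral_le_integral_exp {f : α → ℝ} (hf : Integrable f μ)
    (hef : Integrable (fun x ↦ exp (f x)) μ) : exp (∫ x, f x ∂μ) ≤ ∫ x, exp (f x) ∂μ :=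
  convexOn_exp.map_integral_le continuous_exp.continuousOn isClosed_univ
    (ae_of_all _ fun _ ↦ Set.mem_univ _) hf hef

lemma inv_integral_exp_neg_le_exp_integral {Φ : α → ℝ} (hΦ : Integrable Φ μ)
    (hΦ0 : ∀ x, 0 ≤ Φ x) : (∫ x, exp (-Φ x) ∂μ)⁻¹ ≤ exp (∫ x, Φ x ∂μ) := by
  have hE := integrable_exp_neg_of_nonneg hΦ.1 hΦ0
  rw [inv_le_comm₀ (integral_exp_pos hE) (exp_pos _), ← Real.exp_neg, ← integral_neg]
  exact exp_integral_le_integral_exp hΦ.neg hE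

lemma KLdiv_posterior_le {Φ₁ Φ₂ : α → ℝ} (hΦ₁ : Integrable Φ₁ μ) (hΦ₂ : Integrable Φ₂ μ)
    (hΦ₁0 : ∀ x, 0 ≤ Φ₁ x) (hΦ₂0 : ∀ x, 0 ≤ Φ₂ x) :
    KLdiv (posterior μ Φ₁) (posterior μ Φ₂) ≤
      ENNReal.ofReal (exp (∫ x, Φ₁ x ∂μ) * ∫ x, |Φ₁ x - Φ₂ x| ∂μ) := by
  have hE₁ := integrable_exp_neg_of_nonneg hΦ₁.1 hΦ₁0
  have hE₂ := integrable_exp_neg_of_nonneg hΦ₂.1 hΦ₂0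
  have hE : Integrable (fun x ↦ exp (-Φ₂ x) - exp (-Φ₁ x)) μ := hE₂.sub hE₁
  set Z₁ := ∫ x, exp (-Φ₁ x) ∂μ
  set Z₂ := ∫ x, exp (-Φ₂ x) ∂μ
  have hZ₁ : 0 < Z₁ := integral_exp_pos hE₁
  have hZ₂ : 0 < Z₂ := integral_exp_pos hE₂
  have hdiff : Integrable (fun x ↦ (Φ₂ x - Φ₁ x) * exp (-Φ₁ x)) μ :=
    (hΦ₂.sub hΦ₁).mul_bdd (c := 1) hE₁.1
      (ae_of_all _ fun x ↦ by simpa [abs_of_pos (exp_pos _)] using hΦ₁0 x)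
  have hdiff' : Integrable (fun x ↦ -Φ₁ x - -Φ₂ x) (μ.tilted fun x ↦ -Φ₁ x) := by
    rw [integrable_tilted_iff hE₁]
    simpa only [neg_sub_neg, smul_eq_mul, mul_comm] using hdiff
  have hmean : ∫ x, (exp (-Φ₁ x) / Z₁) • (-Φ₁ x - -Φ₂ x) ∂μ =
      Z₁⁻¹ * ∫ x, (Φ₂ x - Φ₁ x) * exp (-Φ₁ x) ∂μ := by
    rw [← integral_const_mul]
    exact integral_congr_ae (ae_of_all _ fun x ↦ by simp only [smul_eq_mul]; ring)
  have hlog : log Z₂ - log Z₁ ≤ Z₁⁻¹ * ∫ x, (exp (-Φ₂ x) - exp (-Φ₁ x)) ∂μ := by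
    rw [← log_div hZ₂.ne' hZ₁.ne', integral_sub hE₂ hE₁]
    calc log (Z₂ / Z₁) ≤ Z₂ / Z₁ - 1 := log_le_sub_one_of_pos (div_pos hZ₂ hZ₁)
      _ = Z₁⁻¹ * (Z₂ - Z₁) := by field_simp
  rw [posterior_eq_tilted, posterior_eq_tilted, KLdiv_tilted_eq hE₁ hE₂ hdiff', integral_tilted,
    hmean]
  refine ENNReal.ofReal_le_ofReal ?_
  calc _ ≤ Z₁⁻¹ * ∫ x, (Φ₂ x - Φ₁ x) * exp (-Φ₁ x) ∂μ +
        Z₁⁻¹ * ∫ x, (exp (-Φ₂ x) - exp (-Φ₁ x)) ∂μ := by gcongr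
    _ = Z₁⁻¹ * ∫ x, ((Φ₂ x - Φ₁ x) * exp (-Φ₁ x) + (exp (-Φ₂ x) - exp (-Φ₁ x))) ∂μ := by
        rw [← mul_add, integral_add hdiff hE]
    _ ≤ Z₁⁻¹ * ∫ x, |Φ₁ x - Φ₂ x| ∂μ := mul_le_mul_of_nonneg_left
        (integral_mono (hdiff.add hE) (hΦ₁.sub hΦ₂).abs
          fun x ↦ exp_neg_bregman_le_abs_sub (hΦ₁0 x) (hΦ₂0 x)) (by positivity)
    _ ≤ exp (∫ x, Φ₁ x ∂μ) * ∫ x, |Φ₁ x - Φ₂ x| ∂μ := by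
        gcongr
        exact inv_integral_exp_neg_le_exp_integral hΦ₁ hΦ₁0

lemma max_KLdiv_posterior_le {Φ₁ Φ₂ : α → ℝ} (hΦ₁ : Integrable Φ₁ μ) (hΦ₂ : Integrable Φ₂ μ)
    (hΦ₁0 : ∀ x, 0 ≤ Φ₁ x) (hΦ₂0 : ∀ x, 0 ≤ Φ₂ x) :
    max (KLdiv (posterior μ Φ₁) (posterior μ Φ₂)) (KLdiv (posterior μ Φ₂) (posterior μ Φ₁)) ≤
      ENNReal.ofReal (exp (∫ x, Φ₁ x ∂μ + ∫ x, Φ₂ x ∂μ) * ∫ x, |Φ₁ x - Φ₂ x| ∂μ) := by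
  have hS₁ : 0 ≤ ∫ x, Φ₁ x ∂μ := integral_nonneg hΦ₁0
  have hS₂ : 0 ≤ ∫ x, Φ₂ x ∂μ := integral_nonneg hΦ₂0
  refine max_le ((KLdiv_posterior_le hΦ₁ hΦ₂ hΦ₁0 hΦ₂0).trans ?_)
    ((KLdiv_posterior_le hΦ₂ hΦ₁ hΦ₂0 hΦ₁0).trans ?_)
  · gcongr
    linarith
  · simp_rw [abs_sub_comm (Φ₂ _)]
    gcongr
    linarith

end KullbackLeibler

lemma posterior_prod {α β : Type*} [MeasurableSpace α] [MeasurableSpace β] (μ : Measure α)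
    [SFinite μ] (ν : Measure β) [IsProbabilityMeasure ν] {Φ : α → ℝ} (hΦ : AEMeasurable Φ μ) :
    (posterior μ Φ).prod ν = posterior (μ.prod ν) fun z ↦ Φ z.1 := by
  rw [posterior, prod_withDensity_left₀ (by fun_prop), posterior,
    integral_fun_fst fun x ↦ exp (-Φ x), probReal_univ, one_smul]

section SquareIntegrable

variable {α : Type*} [MeasurableSpace α] {μ : Measure α}

lemma integral_mul_le_sqrt_integral_sq_mul_sqrt_integral_sq {f g : α → ℝ} (hf0 : 0 ≤ᵐ[μ] f)
    (hg0 : 0 ≤ᵐ[μ] g) (hf : MemLp f 2 μ) (hg : MemLp g 2 μ) :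
    ∫ x, f x * g x ∂μ ≤ √(∫ x, f x ^ 2 ∂μ) * √(∫ x, g x ^ 2 ∂μ) := by
  have := integral_mul_le_Lp_mul_Lq_of_nonneg Real.HolderConjugate.two_two hf0 hg0
    (by simpa using hf) (by simpa using hg)
  simpa only [Real.rpow_two, ← Real.sqrt_eq_rpow] using this

lemma abs_norm_sq_sub_norm_sq_le {E : Type*} [SeminormedAddCommGroup E] (u v : E) :
    |‖u‖ ^ 2 - ‖v‖ ^ 2| ≤ ‖u - v‖ * ‖u‖ + ‖u - v‖ * ‖v‖ := by
  rw [sq_sub_sq, abs_mul, abs_of_nonneg (by positivity), ← mul_add, mul_comm]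
  gcongr
  exact abs_norm_sub_norm_le u v

lemma integral_abs_norm_sq_sub_norm_sq_le {E : Type*} [NormedAddCommGroup E] {F G : α → E}
    (hF : MemLp F 2 μ) (hG : MemLp G 2 μ) :
    ∫ x, |‖F x‖ ^ 2 - ‖G x‖ ^ 2| ∂μ ≤
      √(∫ x, ‖F x - G x‖ ^ 2 ∂μ) * (√(∫ x, ‖F x‖ ^ 2 ∂μ) + √(∫ x, ‖G x‖ ^ 2 ∂μ)) := by
  have hFG := (hF.sub hG).norm
  have h₁ : Integrable (fun x ↦ ‖F x - G x‖ * ‖F x‖) μ := hFG.integrable_mul hF.norm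
  have h₂ : Integrable (fun x ↦ ‖F x - G x‖ * ‖G x‖) μ := hFG.integrable_mul hG.norm
  have hnn : ∀ H : α → E, 0 ≤ᵐ[μ] fun x ↦ ‖H x‖ := fun H ↦ ae_of_all _ fun _ ↦ norm_nonneg _
  calc ∫ x, |‖F x‖ ^ 2 - ‖G x‖ ^ 2| ∂μ
      ≤ ∫ x, (‖F x - G x‖ * ‖F x‖ + ‖F x - G x‖ * ‖G x‖) ∂μ :=
        integral_mono_of_nonneg (ae_of_all _ fun _ ↦ abs_nonneg _) (h₁.add h₂)
          (ae_of_all _ fun x ↦ abs_norm_sq_sub_norm_sq_le (F x) (G x))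
    _ = ∫ x, ‖F x - G x‖ * ‖F x‖ ∂μ + ∫ x, ‖F x - G x‖ * ‖G x‖ ∂μ := integral_add h₁ h₂
    _ ≤ _ := by
        rw [mul_add]
        gcongr
        · exact integral_mul_le_sqrt_integral_sq_mul_sqrt_integral_sq (hnn _) (hnn _) hFG hF.norm
        · exact integral_mul_le_sqrt_integral_sq_mul_sqrt_integral_sq (hnn _) (hnn _) hFG hG.norm

end SquareIntegrable

open scoped MatrixOrder in
lemma Matrix.PosSemidef.exists_dotProduct_mulVec_eq_norm_sq {n : Type*} [Fintype n]
    [DecidableEq n] {A : Matrix n n ℝ} (hA : A.PosSemidef) :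
    ∃ L : (n → ℝ) →L[ℝ] EuclideanSpace ℝ n, ∀ v, v ⬝ᵥ (A *ᵥ v) = ‖L v‖ ^ 2 := by
  obtain ⟨B, rfl⟩ := CStarAlgebra.nonneg_iff_eq_star_mul_self.mp hA.nonneg
  refine ⟨(EuclideanSpace.equiv n ℝ).symm.toContinuousLinearMap ∘L
    LinearMap.toContinuousLinearMap B.mulVecLin, fun v ↦ ?_⟩
  rw [← real_inner_self_eq_norm_sq, ContinuousLinearMap.comp_apply]
  simp only [LinearMap.coe_toContinuousLinearMap', ContinuousLinearEquiv.coe_coe, mulVecLin_apply,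
    star_eq_conjTranspose, conjTranspose_eq_transpose_of_trivial, ← mulVec_mulVec,
    dotProduct_mulVec v, vecMul_transpose]
  rfl

lemma max_KLdiv_posterior_half_sq_norm_le {α E : Type*} [MeasurableSpace α] {μ : Measure α}
    [IsProbabilityMeasure μ] [NormedAddCommGroup E] {F G : α → E} (hF : MemLp F 2 μ)
    (hG : MemLp G 2 μ) :
    max (KLdiv (posterior μ fun x ↦ ‖F x‖ ^ 2 / 2) (posterior μ fun x ↦ ‖G x‖ ^ 2 / 2))
        (KLdiv (posterior μ fun x ↦ ‖G x‖ ^ 2 / 2) (posterior μ fun x ↦ ‖F x‖ ^ 2 / 2)) ≤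
      ENNReal.ofReal (√2 * exp (2 * ∫ x, ‖G x‖ ^ 2 / 2 ∂μ + 2 * ∫ x, ‖F x‖ ^ 2 / 2 ∂μ) *
        (√(∫ x, ‖G x‖ ^ 2 / 2 ∂μ) + √(∫ x, ‖F x‖ ^ 2 / 2 ∂μ)) *
        √(∫ x, ‖F x - G x‖ ^ 2 ∂μ)) := by
  have hF2 := (hF.integrable_norm_pow two_ne_zero).div_const 2
  have hG2 := (hG.integrable_norm_pow two_ne_zero).div_const 2
  set S₁ := ∫ x, ‖F x‖ ^ 2 / 2 ∂μ
  set S₂ := ∫ x, ‖G x‖ ^ 2 / 2 ∂μ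
  set K := √(∫ x, ‖F x - G x‖ ^ 2 ∂μ) * (√S₁ + √S₂)
  have hsqrt : ∀ H : α → E, √(∫ x, ‖H x‖ ^ 2 ∂μ) = √2 * √(∫ x, ‖H x‖ ^ 2 / 2 ∂μ) := fun H ↦ by
    rw [← Real.sqrt_mul zero_le_two, integral_div, mul_div_cancel₀ _ two_ne_zero]
  have hD : ∫ x, |‖F x‖ ^ 2 / 2 - ‖G x‖ ^ 2 / 2| ∂μ ≤ √2 * K := by
    have h := integral_abs_norm_sq_sub_norm_sq_le hF hG
    rw [hsqrt F, hsqrt G] at h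
    simp_rw [← sub_div, abs_div, abs_two]
    rw [integral_div, div_le_iff₀ two_pos]
    nlinarith [Real.sqrt_nonneg 2, Real.sq_sqrt zero_le_two, show 0 ≤ K by positivity]
  refine (max_KLdiv_posterior_le hF2 hG2 (fun _ ↦ by positivity) fun _ ↦ by positivity).trans
    (ENNReal.ofReal_le_ofReal ?_)
  have hS₁ : 0 ≤ S₁ := integral_nonneg fun _ ↦ by positivity
  have hS₂ : 0 ≤ S₂ := integral_nonneg fun _ ↦ by positivity
  calc exp (S₁ + S₂) * ∫ x, |‖F x‖ ^ 2 / 2 - ‖G x‖ ^ 2 / 2| ∂μ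
      ≤ exp (2 * S₂ + 2 * S₁) * (√2 * K) := by
        gcongr exp ?_ * ?_
        linarith
    _ = _ := by ring

theorem stmt11_general {X W U : Type*} [MeasurableSpace X] [MeasurableSpace W]
    [NormedAddCommGroup U] [NormedSpace ℝ U]
    [MeasurableSpace U] [BorelSpace U]
    (μθ : Measure X) [IsProbabilityMeasure μθ] (μδ : Measure W) [IsProbabilityMeasure μδ]
    {n : ℕ}
    (Mdag Mappr : X → U) (hMdag : Measurable Mdag) (hMappr : Measurable Mappr)
    (e : X × W → U) (he : Measurable e)
    (O : U →L[ℝ] (Fin n → ℝ)) (y : Fin n → ℝ)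
    (Γ : Matrix (Fin n) (Fin n) ℝ) (hΓ : Γ.PosDef)
    (Φdag : X → ℝ) (Φjoint : X × W → ℝ)
    (hΦdag : Φdag = fun θ => (1/2) * ((y - O (Mdag θ)) ⬝ᵥ (Γ⁻¹ *ᵥ (y - O (Mdag θ)))))
    (hΦjoint : Φjoint = fun p => (1/2) *
      ((y - O (Mappr p.1) - O (e p)) ⬝ᵥ (Γ⁻¹ *ᵥ (y - O (Mappr p.1) - O (e p)))))
    (hid : Integrable Φdag μθ) (hij : Integrable Φjoint (μθ.prod μδ)) :
    max (KLdiv ((posterior μθ Φdag).prod μδ) (posterior (μθ.prod μδ) Φjoint))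
        (KLdiv (posterior (μθ.prod μδ) Φjoint) ((posterior μθ Φdag).prod μδ)) ≤
      ENNReal.ofReal
        ((Real.sqrt 2 *
            Real.exp (2 * (∫ p, |Φjoint p| ∂(μθ.prod μδ)) + 2 * ∫ θ, |Φdag θ| ∂μθ) *
            (Real.sqrt (∫ p, |Φjoint p| ∂(μθ.prod μδ)) + Real.sqrt (∫ θ, |Φdag θ| ∂μθ))) *
          Real.sqrt (∫ p, |(O (Mdag p.1 - Mappr p.1 - e p)) ⬝ᵥ
            (Γ⁻¹ *ᵥ (O (Mdag p.1 - Mappr p.1 - e p)))| ∂(μθ.prod μδ))) := by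
  obtain ⟨L, hL⟩ := hΓ.inv.posSemidef.exists_dotProduct_mulVec_eq_norm_sq
  set F : X × W → EuclideanSpace ℝ (Fin n) := fun p ↦ L (y - O (Mdag p.1))
  set G : X × W → EuclideanSpace ℝ (Fin n) := fun p ↦ L (y - O (Mappr p.1) - O (e p))
  have hΦdagF : ∀ p : X × W, Φdag p.1 = ‖F p‖ ^ 2 / 2 := fun p ↦ by
    simp only [hΦdag, hL, F]; ring
  have hΦjointG : Φjoint = fun p ↦ ‖G p‖ ^ 2 / 2 := by
    ext p; simp only [hΦjoint, hL, G]; ring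
  have hFG : ∀ p, |O (Mdag p.1 - Mappr p.1 - e p) ⬝ᵥ (Γ⁻¹ *ᵥ O (Mdag p.1 - Mappr p.1 - e p))| =
      ‖F p - G p‖ ^ 2 := fun p ↦ by
    rw [hL, abs_of_nonneg (sq_nonneg _), ← map_sub, ← norm_neg, ← map_neg]
    congr 3
    simp only [map_sub]
    abel
  have hF : MemLp F 2 (μθ.prod μδ) := by
    rw [memLp_two_iff_integrable_sq_norm (by fun_prop : Measurable F).aestronglyMeasurable]
    simpa [hΦdagF] using (hid.comp_fst μδ).mul_const 2
  have hG : MemLp G 2 (μθ.prod μδ) := by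
    rw [memLp_two_iff_integrable_sq_norm (by fun_prop : Measurable G).aestronglyMeasurable]
    simpa [hΦjointG] using hij.mul_const 2
  have hlift : ∫ θ, |Φdag θ| ∂μθ = ∫ p, |Φdag p.1| ∂(μθ.prod μδ) := by
    rw [integral_fun_fst fun θ ↦ |Φdag θ|, probReal_univ, one_smul]
  rw [posterior_prod μθ μδ hid.aemeasurable, hlift]
  simp only [hΦdagF, hΦjointG, hFG, abs_div, abs_pow, abs_norm, abs_two]
  exact max_KLdiv_posterior_half_sq_norm_le hF hG

theorem stmt11 {X W U : Type*} [MeasurableSpace X] [MeasurableSpace W]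
    [NormedAddCommGroup U] [NormedSpace ℝ U] [CompleteSpace U]
    [MeasurableSpace U] [BorelSpace U]
    (μθ : Measure X) [IsProbabilityMeasure μθ] (μδ : Measure W) [IsProbabilityMeasure μδ]
    {n : ℕ}
    (Mdag Mappr : X → U) (hMdag : Measurable Mdag) (hMappr : Measurable Mappr)
    (e : X × W → U) (he : Measurable e)
    (O : U →L[ℝ] (Fin n → ℝ)) (y : Fin n → ℝ)
    (Γ : Matrix (Fin n) (Fin n) ℝ) (hΓ : Γ.PosDef)
    (Φdag : X → ℝ) (Φjoint : X × W → ℝ)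
    (hΦdag : Φdag = fun θ => (1/2) * ((y - O (Mdag θ)) ⬝ᵥ (Γ⁻¹ *ᵥ (y - O (Mdag θ)))))
    (hΦjoint : Φjoint = fun p => (1/2) *
      ((y - O (Mappr p.1) - O (e p)) ⬝ᵥ (Γ⁻¹ *ᵥ (y - O (Mappr p.1) - O (e p)))))
    (hid : Integrable Φdag μθ) (hij : Integrable Φjoint (μθ.prod μδ)) :
    max (KLdiv ((posterior μθ Φdag).prod μδ) (posterior (μθ.prod μδ) Φjoint))
        (KLdiv (posterior (μθ.prod μδ) Φjoint) ((posterior μθ Φdag).prod μδ)) ≤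
      ENNReal.ofReal
        ((Real.sqrt 2 *
            Real.exp (2 * (∫ p, |Φjoint p| ∂(μθ.prod μδ)) + 2 * ∫ θ, |Φdag θ| ∂μθ) *
            (Real.sqrt (∫ p, |Φjoint p| ∂(μθ.prod μδ)) + Real.sqrt (∫ θ, |Φdag θ| ∂μθ))) *
          Real.sqrt (∫ p, |(O (Mdag p.1 - Mappr p.1 - e p)) ⬝ᵥ
            (Γ⁻¹ *ᵥ (O (Mdag p.1 - Mappr p.1 - e p)))| ∂(μθ.prod μδ))) :=
  stmt11_general μθ μδ Mdag Mappr hMdag hMappr e he O y Γ hΓ Φdag Φjoint hΦdag hΦjoint hid hij
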